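/- arXiv:1612.05312 — 5 statements merged into one kernel-verified Lean document; each statement's English description precedes it below -/
import Mathlib

section
/- For every fixed δ ∈ ℝ, limsup_{N → ∞} of g(N) := (πN)^{-1/2} ∫_{0}^{π/2} exp(-(log(cos x) + N + δ)²/(4N)) · (1/cos x) dx is at most 2. -/
/-!
On `[0, π/2)` we have `sin x + cos x ≥ 1`, i.e. `1 / cos x ≤ tan x + 1`. The `tan x` part is
the Jacobian of the substitution `t = log (cos x)`, which maps `(0, π/2)` onto `(-∞, 0)`, so it
contributes at most the full Gaussian integral `√(4πN)`; the `1` part contributes at most `π/2`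
because the Gaussian factor is at most `1`. Hence `g(N) ≤ 2 + (π/2) (πN)^(-1/2) → 2`.
-/
open Real Filter MeasureTheory Set

lemma hasDerivAt_log_cos {x : ℝ} (hx : 0 < cos x) :
    HasDerivAt (fun y => log (cos y)) (-tan x) x := by
  simpa [tan_eq_sin_div_cos, neg_div] using (hasDerivAt_cos x).log hx.ne'

lemma strictAntiOn_log_cos : StrictAntiOn (fun x => log (cos x)) (Ico 0 (π / 2)) := by
  have hsub : Ico 0 (π / 2) ⊆ Icc 0 π :=
    Ico_subset_Icc_self.trans (Icc_subset_Icc_right (by linarith [pi_pos]))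
  intro x hx y hy hxy
  exact log_lt_log (cos_pos_of_mem_Ioo ⟨by linarith [hy.1, pi_pos], hy.2⟩)
    (strictAntiOn_cos (hsub hx) (hsub hy) hxy)

lemma image_log_cos_Ioo : (fun x => log (cos x)) '' Ioo 0 (π / 2) = Iio 0 := by
  ext t
  constructor
  · rintro ⟨x, hx, rfl⟩
    simpa using strictAntiOn_log_cos ⟨le_rfl, pi_div_two_pos⟩ (Ioo_subset_Ico_self hx) hx.1
  · intro ht
    have he : exp t < 1 := exp_lt_one_iff.2 ht
    refine ⟨arccos (exp t), ⟨arccos_pos.2 he, arccos_lt_pi_div_two.2 (exp_pos t)⟩, ?_⟩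
    simp only [cos_arccos (by linarith [exp_pos t]) he.le, log_exp]

lemma cos_pos_of_mem_Ioo_zero_pi_div_two {x : ℝ} (hx : x ∈ Ioo 0 (π / 2)) : 0 < cos x :=
  cos_pos_of_mem_Ioo ⟨by linarith [hx.1, pi_pos], hx.2⟩

lemma hasDerivWithinAt_log_cos_Ioo :
    ∀ x ∈ Ioo 0 (π / 2), HasDerivWithinAt (fun y => log (cos y)) (-tan x) (Ioo 0 (π / 2)) x :=
  fun _ hx => (hasDerivAt_log_cos (cos_pos_of_mem_Ioo_zero_pi_div_two hx)).hasDerivWithinAt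

lemma abs_neg_tan_smul_eqOn (G : ℝ → ℝ) :
    EqOn (fun x => |-tan x| • G (log (cos x))) (fun x => tan x * G (log (cos x)))
      (Ioo 0 (π / 2)) :=
  fun _ hx => by simp [abs_of_pos (tan_pos_of_pos_of_lt_pi_div_two hx.1 hx.2)]

theorem integral_tan_mul_comp_log_cos (G : ℝ → ℝ) :
    ∫ x in Ioo 0 (π / 2), tan x * G (log (cos x)) = ∫ t in Iio 0, G t := by
  rw [← image_log_cos_Ioo, integral_image_eq_integral_abs_deriv_smul measurableSet_Ioo
    hasDerivWithinAt_log_cos_Ioo (strictAntiOn_log_cos.mono Ioo_subset_Ico_self).injOn]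
  exact setIntegral_congr_fun measurableSet_Ioo (abs_neg_tan_smul_eqOn G).symm

theorem integrableOn_tan_mul_comp_log_cos {G : ℝ → ℝ} (hG : IntegrableOn G (Iio 0)) :
    IntegrableOn (fun x => tan x * G (log (cos x))) (Ioo 0 (π / 2)) := by
  rw [← image_log_cos_Ioo, integrableOn_image_iff_integrableOn_abs_deriv_smul measurableSet_Ioo
    hasDerivWithinAt_log_cos_Ioo (strictAntiOn_log_cos.mono Ioo_subset_Ico_self).injOn] at hG
  exact hG.congr_fun (abs_neg_tan_smul_eqOn G) measurableSet_Ioo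

lemma one_div_cos_le_tan_add_one {x : ℝ} (hs : 0 ≤ sin x) (hc : 0 < cos x) :
    1 / cos x ≤ tan x + 1 := by
  have hsum : 1 ≤ sin x + cos x := by nlinarith [sin_sq_add_cos_sq x]
  rw [tan_eq_sin_div_cos, div_add_one hc.ne', div_le_div_iff_of_pos_right hc]
  linarith

theorem intervalIntegral_comp_log_cos_mul_one_div_cos_le {G : ℝ → ℝ} (hG : Integrable G)
    (hG0 : ∀ t, 0 ≤ G t) (hG1 : ∀ t, G t ≤ 1) :
    ∫ x in 0..π / 2, G (log (cos x)) * (1 / cos x) ≤ (∫ t, G t) + π / 2 := by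
  rw [intervalIntegral.integral_of_le pi_div_two_pos.le, integral_Ioc_eq_integral_Ioo]
  have hdom : IntegrableOn (fun x => tan x * G (log (cos x)) + 1) (Ioo 0 (π / 2)) :=
    (integrableOn_tan_mul_comp_log_cos hG.integrableOn).add
      (integrableOn_const measure_Ioo_lt_top.ne)
  calc ∫ x in Ioo 0 (π / 2), G (log (cos x)) * (1 / cos x)
      ≤ ∫ x in Ioo 0 (π / 2), (tan x * G (log (cos x)) + 1) := by
        refine integral_mono_of_nonneg ?_ hdom ?_ <;>
          filter_upwards [ae_restrict_mem measurableSet_Ioo] with x hx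
        · have := cos_pos_of_mem_Ioo_zero_pi_div_two hx
          have := hG0 (log (cos x))
          positivity
        · have hc := cos_pos_of_mem_Ioo_zero_pi_div_two hx
          have hs : 0 ≤ sin x :=
            sin_nonneg_of_nonneg_of_le_pi hx.1.le (by linarith [hx.2, pi_pos])
          calc G (log (cos x)) * (1 / cos x) ≤ G (log (cos x)) * (tan x + 1) :=
                mul_le_mul_of_nonneg_left (one_div_cos_le_tan_add_one hs hc) (hG0 _)
            _ ≤ tan x * G (log (cos x)) + 1 := by
                nlinarith [hG1 (log (cos x))]
    _ = (∫ t in Iio 0, G t) + π / 2 := by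
        rw [integral_add (integrableOn_tan_mul_comp_log_cos hG.integrableOn)
          (integrableOn_const measure_Ioo_lt_top.ne), integral_tan_mul_comp_log_cos]
        simp [pi_div_two_pos.le]
    _ ≤ (∫ t, G t) + π / 2 := by
        grw [setIntegral_le_integral hG (ae_of_all _ hG0)]

lemma exp_neg_sq_add_div_eq (c a t : ℝ) :
    exp (-((t + c) ^ 2 / a)) = exp (-a⁻¹ * (t + c) ^ 2) := by
  rw [neg_mul, inv_mul_eq_div]

theorem integrable_exp_neg_sq_add_div (c : ℝ) {a : ℝ} (ha : 0 < a) :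
    Integrable fun t => exp (-((t + c) ^ 2 / a)) := by
  simp_rw [exp_neg_sq_add_div_eq c a]
  exact (integrable_exp_neg_mul_sq (inv_pos.2 ha)).comp_add_right c

theorem integral_exp_neg_sq_add_div (c a : ℝ) :
    ∫ t, exp (-((t + c) ^ 2 / a)) = √(π * a) := by
  simp_rw [exp_neg_sq_add_div_eq c a]
  rw [integral_add_right_eq_self (fun t => exp (-a⁻¹ * t ^ 2)) c, integral_gaussian,
    div_inv_eq_mul]

noncomputable def grimReaperG (δ N : ℝ) : ℝ :=
  (π * N) ^ (-(1 : ℝ) / 2) *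
    ∫ x in (0 : ℝ)..(π / 2), exp (-((log (cos x) + N + δ) ^ 2 / (4 * N))) * (1 / cos x)

lemma grimReaperG_nonneg (δ : ℝ) {N : ℝ} (hN : 0 ≤ N) : 0 ≤ grimReaperG δ N := by
  refine mul_nonneg (rpow_nonneg (by positivity) _) (intervalIntegral.integral_nonneg
    pi_div_two_pos.le fun x hx => ?_)
  have := cos_nonneg_of_mem_Icc ⟨by linarith [hx.1, pi_pos], hx.2⟩
  positivity

lemma rpow_neg_one_div_two_mul_sqrt_four_mul {y : ℝ} (hy : 0 < y) :
    y ^ (-(1 : ℝ) / 2) * √(4 * y) = 2 := by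
  rw [neg_div, rpow_neg hy.le, ← sqrt_eq_rpow, sqrt_mul' _ hy.le,
    show √4 = 2 by rw [show (4 : ℝ) = 2 ^ 2 by norm_num, sqrt_sq zero_le_two]]
  field_simp [(sqrt_pos.2 hy).ne']

theorem grimReaperG_le (δ : ℝ) {N : ℝ} (hN : 0 < N) :
    grimReaperG δ N ≤ 2 + π / 2 * (π * N) ^ (-(1 : ℝ) / 2) := by
  have hint : ∫ x in (0 : ℝ)..(π / 2),
      exp (-((log (cos x) + N + δ) ^ 2 / (4 * N))) * (1 / cos x) ≤ √(π * (4 * N)) + π / 2 := by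
    have := intervalIntegral_comp_log_cos_mul_one_div_cos_le
      (integrable_exp_neg_sq_add_div (N + δ) (by positivity : 0 < 4 * N))
      (fun _ => (exp_pos _).le) (fun _ => exp_le_one_iff.2 (neg_nonpos.2 (by positivity)))
    simpa only [add_assoc, integral_exp_neg_sq_add_div] using this
  calc grimReaperG δ N ≤ (π * N) ^ (-(1 : ℝ) / 2) * (√(π * (4 * N)) + π / 2) :=
        mul_le_mul_of_nonneg_left hint (rpow_nonneg (by positivity) _)
    _ = 2 + π / 2 * (π * N) ^ (-(1 : ℝ) / 2) := by
        rw [mul_add, mul_left_comm, rpow_neg_one_div_two_mul_sqrt_four_mul (by positivity),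
          mul_comm]

/-- The key upper bound in the entropy computation for the grim reaper: for every fixed
`δ ∈ ℝ`, the limsup as `N → ∞` of
`g(N) = (πN)^{-1/2} ∫₀^{π/2} exp(-(log cos x + N + δ)²/(4N)) (1/cos x) dx` is at most `2`. -/
theorem grim_reaper_g_limsup_le_two (δ : ℝ) :
    Filter.limsup (fun N : ℝ =>
        (π * N) ^ (-(1 : ℝ) / 2) *
          ∫ x in (0 : ℝ)..(π / 2),
            Real.exp (-((Real.log (Real.cos x) + N + δ) ^ 2 / (4 * N))) *
              (1 / Real.cos x))
      Filter.atTop ≤ 2 := by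
  change limsup (grimReaperG δ) atTop ≤ 2
  have hlim : Tendsto (fun N : ℝ => 2 + π / 2 * (π * N) ^ (-(1 : ℝ) / 2)) atTop (nhds 2) := by
    simpa [neg_div] using (((tendsto_rpow_neg_atTop (by norm_num : (0 : ℝ) < 1 / 2)).comp
      (tendsto_id.const_mul_atTop pi_pos)).const_mul (π / 2)).const_add 2
  refine (limsup_le_limsup ?_ ?_ hlim.isBoundedUnder_le).trans_eq hlim.limsup_eq
  · filter_upwards [eventually_gt_atTop 0] with N hN using grimReaperG_le δ hN
  · exact isCoboundedUnder_le_of_eventually_le atTop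
      ((eventually_ge_atTop 0).mono fun N hN => grimReaperG_nonneg δ hN)
end

section
/- Let n ≥ 2 and let f : [0,∞) → ℝ be continuous with f(0) = 0, twice continuously differentiable on (0,∞) with lim_{r→0⁺} f'(r) = 0, and satisfy f''(r) = (1 + f'(r)²)(1 - (n-1)f'(r)/r) for all r > 0. Then f'(r) < r/(n-1) for all r > 0, and consequently f(r) ≤ r²/(2(n-1)) for all r ≥ 0. -/
open Filter Set Topology

/-!
With `c = n - 1`, the ODE makes `f''` nonpositive wherever `f' ≥ r / c`, so `f'` can only cross
the line `r / c` downwards. Since `f'(0⁺) = 0`, fencing `f'` on `[a, r]` below the lines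
`r / c + δ` and letting `a, δ ↓ 0` gives `f' ≤ r / c`; a touching point would then maximise
`f' - r / c`, yet the derivative `f'' - 1/c` there is negative. Integrating `f' < r / c` bounds `f`.
-/

section Barrier

variable {u : ℝ → ℝ} {k : ℝ}

theorem le_const_mul_of_deriv_lt (hu : ∀ r > 0, DifferentiableAt ℝ u r)
    (hu0 : Tendsto u (𝓝[>] 0) (𝓝 0)) (hbarrier : ∀ r > 0, k * r < u r → deriv u r < k)
    {r : ℝ} (hr : 0 < r) : u r ≤ k * r := by
  refine le_of_forall_pos_le_add fun δ hδ => ?_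
  have hgap : Tendsto (fun a => u a - k * a) (𝓝[>] 0) (𝓝 0) := by
    simpa using hu0.sub (((continuous_const_mul k).tendsto 0).mono_left nhdsWithin_le_nhds)
  obtain ⟨a, hstart, ha⟩ : ∃ a, u a - k * a < δ ∧ a ∈ Ioo 0 r :=
    ((hgap.eventually (gt_mem_nhds hδ)).and (Ioo_mem_nhdsGT hr)).exists
  exact image_le_of_deriv_right_lt_deriv_boundary (a := a) (b := r)
    (f' := deriv u) (B := fun x => k * x + δ) (B' := fun _ => k)
    (fun x hx => (hu x (ha.1.trans_le hx.1)).continuousAt.continuousWithinAt)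
    (fun x hx => (hu x (ha.1.trans_le hx.1)).hasDerivAt.hasDerivWithinAt)
    (by linarith) (fun x => by simpa using ((hasDerivAt_id x).const_mul k).add_const δ)
    (fun x hx hx_eq => hbarrier x (ha.1.trans_le hx.1) (by linarith))
    (right_mem_Icc.2 ha.2.le)

theorem lt_const_mul_of_deriv_lt (hu : ∀ r > 0, DifferentiableAt ℝ u r)
    (hu0 : Tendsto u (𝓝[>] 0) (𝓝 0)) (hbarrier : ∀ r > 0, k * r ≤ u r → deriv u r < k)
    {r : ℝ} (hr : 0 < r) : u r < k * r := by
  have hle : ∀ x > 0, u x ≤ k * x := fun x hx =>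
    le_const_mul_of_deriv_lt hu hu0 (fun y hy h => hbarrier y hy h.le) hx
  refine (hle r hr).lt_of_ne fun heq => (hbarrier r hr heq.ge).ne ?_
  have hmax : IsLocalMax (fun x => u x - k * x) r := by
    filter_upwards [Ioi_mem_nhds hr] with x hx
    linarith [hle x hx]
  have hzero := hmax.hasDerivAt_eq_zero ((hu r hr).hasDerivAt.sub ((hasDerivAt_id r).const_mul k))
  linarith

end Barrier

theorem le_add_const_mul_sq_of_deriv_le {f : ℝ → ℝ} {k : ℝ} (hcont : ContinuousOn f (Ici 0))
    (hdiff : ∀ r > 0, DifferentiableAt ℝ f r) (hderiv : ∀ r > 0, deriv f r ≤ k * r)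
    {r : ℝ} (hr : 0 ≤ r) : f r ≤ f 0 + k * r ^ 2 / 2 := by
  have hmono : MonotoneOn (fun t => k * t ^ 2 / 2 - f t) (Ici 0) := by
    refine monotoneOn_of_hasDerivWithinAt_nonneg (f' := fun t => k * t - deriv f t)
      (convex_Ici 0) ((by fun_prop : Continuous fun t : ℝ => k * t ^ 2 / 2).continuousOn.sub hcont)
      (fun t ht => ?_) (fun t ht => ?_) <;> rw [interior_Ici] at ht
    · have hsq : HasDerivAt (fun t : ℝ => k * t ^ 2 / 2) (k * t) t :=
        (((hasDerivAt_pow 2 t).const_mul k).div_const 2).congr_deriv (by ring)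
      exact (hsq.sub (hdiff t ht).hasDerivAt).hasDerivWithinAt
    · exact sub_nonneg.2 (hderiv t ht)
  linarith [hmono self_mem_Ici hr hr]

/-- Part (1) of Proposition 4.2: the bowl soliton profile `f`, solving
`f'' = (1 + f'²)(1 - (n-1) f' / r)` on `(0,∞)` with `f(0) = 0` and `f'(0⁺) = 0`,
satisfies `f'(r) < r/(n-1)` for all `r > 0` and `f(r) ≤ r²/(2(n-1))` for all `r ≥ 0`. -/
theorem bowl_profile_gradient_upper_bound (n : ℕ) (hn : 2 ≤ n) (f : ℝ → ℝ)
    (hf0 : f 0 = 0)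
    (hcont : ContinuousOn f (Set.Ici 0))
    (hC2 : ContDiffOn ℝ 2 f (Set.Ioi 0))
    (hd0 : Tendsto (deriv f) (nhdsWithin 0 (Set.Ioi 0)) (nhds 0))
    (hODE : ∀ r : ℝ, 0 < r → deriv (deriv f) r =
      (1 + (deriv f r) ^ 2) * (1 - ((n : ℝ) - 1) * deriv f r / r)) :
    (∀ r : ℝ, 0 < r → deriv f r < r / ((n : ℝ) - 1)) ∧
    (∀ r : ℝ, 0 ≤ r → f r ≤ r ^ 2 / (2 * ((n : ℝ) - 1))) := by
  have hc : (0 : ℝ) < n - 1 := by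
    have : (2 : ℝ) ≤ n := by exact_mod_cast hn
    linarith
  have hdiff : ∀ r > 0, DifferentiableAt ℝ f r := fun r hr =>
    (hC2.differentiableOn two_ne_zero).differentiableAt (Ioi_mem_nhds hr)
  have hdiff' : ∀ r > 0, DifferentiableAt ℝ (deriv f) r := fun r hr =>
    ((hC2.deriv_of_isOpen isOpen_Ioi (by norm_num)).differentiableOn one_ne_zero).differentiableAt
      (Ioi_mem_nhds hr)
  have hconcave : ∀ r > 0, ((n : ℝ) - 1)⁻¹ * r ≤ deriv f r →
      deriv (deriv f) r < ((n : ℝ) - 1)⁻¹ := by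
    intro r hr hle
    have hsteep : 1 ≤ ((n : ℝ) - 1) * deriv f r / r := by
      rw [le_div_iff₀ hr, ← inv_mul_le_iff₀ hc]
      linarith
    rw [hODE r hr]
    exact (mul_nonpos_of_nonneg_of_nonpos (by positivity) (by linarith)).trans_lt (inv_pos.2 hc)
  have hgrad : ∀ r > 0, deriv f r < ((n : ℝ) - 1)⁻¹ * r := fun r hr =>
    lt_const_mul_of_deriv_lt hdiff' hd0 hconcave hr
  refine ⟨fun r hr => by simpa only [div_eq_inv_mul] using hgrad r hr, fun r hr => ?_⟩
  calc f r ≤ f 0 + ((n : ℝ) - 1)⁻¹ * r ^ 2 / 2 :=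
        le_add_const_mul_sq_of_deriv_le hcont hdiff (fun t ht => (hgrad t ht).le) hr
    _ = r ^ 2 / (2 * ((n : ℝ) - 1)) := by rw [hf0, zero_add]; field_simp
end

section
/- Let n ≥ 2 and let f : [0,∞) → ℝ be continuous with f(0) = 0, twice continuously differentiable on (0,∞) with lim_{r→0⁺} f'(r) = 0, and satisfy f''(r) = (1 + f'(r)²)(1 - (n-1)f'(r)/r) for all r > 0. Then for every ε ∈ (0, 1/n) and every r > 0 one has f'(r) > (1/n - ε)·r; in particular f'(r) > r/(2n) for all r > 0. -/
open Real Filter Set Topology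

/-! With `g = f'`, the equation reads `g' = (1 + g²)(1 - (n - 1) g / r)`. Wherever `g(r) < c r`
with `n c < 1`, it gives `g'(r) ≥ 1 - (n - 1) c > c`, so `g(r) - c r` increases wherever it is
negative; as it tends to `0` at `0⁺`, it is never negative. Taking `c = 1/n - ε/2` gives the
claim. -/

theorem HasDerivAt.eventually_lt_left_of_pos {m : ℝ → ℝ} {d a : ℝ} (hm : HasDerivAt m d a)
    (hd : 0 < d) : ∀ᶠ x in 𝓝[<] a, m x < m a := by
  filter_upwards [(hasDerivAt_iff_tendsto_slope_left_right.mp hm).1.eventually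
    (eventually_gt_nhds hd), self_mem_nhdsWithin] with x hslope hx
  exact (slope_pos_iff_gt hx).mp hslope

/-- At a minimum of `m` over `(0, r]` with `m < 0`, the derivative would be positive, so `m` would
take smaller values just to the left. -/
theorem nonneg_of_tendsto_zero_of_deriv_pos {m m' : ℝ → ℝ}
    (hm : ∀ x, 0 < x → HasDerivAt m (m' x) x) (hpos : ∀ x, 0 < x → m x < 0 → 0 < m' x)
    (hlim : Tendsto m (𝓝[>] 0) (𝓝 0)) {r : ℝ} (hr : 0 < r) : 0 ≤ m r := by
  by_contra! hmr
  obtain ⟨δ, hδ, hδm⟩ : ∃ δ > 0, ∀ x ∈ Ioo 0 δ, m r < m x :=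
    mem_nhdsGT_iff_exists_Ioo_subset.mp (hlim.eventually (eventually_gt_nhds hmr))
  have hδr : 0 < min δ r := lt_min hδ hr
  obtain ⟨x₀, hx₀, hmin⟩ := isCompact_Icc.exists_isMinOn
    (nonempty_Icc.mpr (min_le_right δ r)) <| continuousOn_of_forall_continuousAt
      fun x hx ↦ (hm x (hδr.trans_le hx.1)).continuousAt
  have hx₀pos : 0 < x₀ := hδr.trans_le hx₀.1
  have hmx₀r : m x₀ ≤ m r := hmin ⟨min_le_right δ r, le_rfl⟩
  have hmin' : ∀ x ∈ Ioc 0 r, m x₀ ≤ m x := by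
    intro x hx
    rcases lt_or_ge x (min δ r) with hxδ | hxδ
    · linarith [hδm x ⟨hx.1, hxδ.trans_le (min_le_left δ r)⟩]
    · exact hmin ⟨hxδ, hx.2⟩
  obtain ⟨x, hx, hxpos⟩ := ((hm x₀ hx₀pos).eventually_lt_left_of_pos
    (hpos x₀ hx₀pos (hmx₀r.trans_lt hmr))).and (Ioo_mem_nhdsLT hx₀pos) |>.exists
  exact (hmin' x ⟨hxpos.1, hxpos.2.le.trans hx₀.2⟩).not_gt hx

theorem lt_one_add_sq_mul_one_sub_of_lt {n c r y : ℝ} (hn : 1 ≤ n) (hnc : n * c < 1) (hr : 0 < r)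
    (hy : y < c * r) : c < (1 + y ^ 2) * (1 - (n - 1) * y / r) := by
  have hyr : y / r < c := (div_lt_iff₀ hr).mpr hy
  rw [mul_div_assoc]
  have hfac : 0 ≤ 1 - (n - 1) * (y / r) := by
    nlinarith [mul_le_mul_of_nonneg_left hyr.le (sub_nonneg.mpr hn)]
  nlinarith [mul_nonneg (sq_nonneg y) hfac]

theorem mul_le_of_hasDerivAt_bowl_ode {n c : ℝ} {g : ℝ → ℝ} (hn : 1 ≤ n) (hnc : n * c < 1)
    (hg : ∀ r, 0 < r → HasDerivAt g ((1 + g r ^ 2) * (1 - (n - 1) * g r / r)) r)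
    (hg0 : Tendsto g (𝓝[>] 0) (𝓝 0)) {r : ℝ} (hr : 0 < r) : c * r ≤ g r := by
  have hcr : Tendsto (fun s ↦ c * s) (𝓝[>] 0) (𝓝 0) := by
    simpa using ((continuous_const_mul c).tendsto 0).mono_left nhdsWithin_le_nhds
  refine sub_nonneg.mp <| nonneg_of_tendsto_zero_of_deriv_pos (m := fun s ↦ g s - c * s)
    (fun s hs ↦ (hg s hs).sub (hasDerivAt_const_mul c)) (fun s hs hms ↦ ?_)
    (by simpa using hg0.sub hcr) hr
  exact sub_pos.mpr (lt_one_add_sq_mul_one_sub_of_lt hn hnc hs (sub_neg.mp hms))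

theorem bowl_profile_gradient_lower_bound_general (n : ℕ) (hn : 2 ≤ n) (f : ℝ → ℝ)
    (hC2 : ContDiffOn ℝ 2 f (Set.Ioi 0))
    (hd0 : Tendsto (deriv f) (nhdsWithin 0 (Set.Ioi 0)) (nhds 0))
    (hODE : ∀ r : ℝ, 0 < r → deriv (deriv f) r =
      (1 + (deriv f r) ^ 2) * (1 - ((n : ℝ) - 1) * deriv f r / r)) :
    (∀ ε : ℝ, 0 < ε → ε < 1 / (n : ℝ) →
      ∀ r : ℝ, 0 < r → (1 / (n : ℝ) - ε) * r < deriv f r) ∧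
    (∀ r : ℝ, 0 < r → r / (2 * (n : ℝ)) < deriv f r) := by
  have hn' : (2 : ℝ) ≤ n := by exact_mod_cast hn
  have hf' : ContDiffOn ℝ 1 (deriv f) (Ioi 0) := hC2.deriv_of_isOpen isOpen_Ioi (by norm_num)
  have hg : ∀ r : ℝ, 0 < r → HasDerivAt (deriv f)
      ((1 + deriv f r ^ 2) * (1 - ((n : ℝ) - 1) * deriv f r / r)) r := fun r hr ↦
    hODE r hr ▸ ((hf'.differentiableOn one_ne_zero).differentiableAt
      (isOpen_Ioi.mem_nhds hr)).hasDerivAt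
  have lower : ∀ ε : ℝ, 0 < ε → ε < 1 / (n : ℝ) →
      ∀ r : ℝ, 0 < r → (1 / (n : ℝ) - ε) * r < deriv f r := by
    intro ε hε _ r hr
    have hnc : (n : ℝ) * (1 / n - ε / 2) < 1 := by
      rw [mul_sub, mul_one_div_cancel (by positivity)]; nlinarith
    nlinarith [mul_le_of_hasDerivAt_bowl_ode (by linarith) hnc hg hd0 hr]
  refine ⟨lower, fun r hr ↦ ?_⟩
  have := lower (1 / (2 * n)) (by positivity) (by gcongr; linarith) r hr
  convert this using 1
  ring

/-- Part (2) of Proposition 4.2: the bowl soliton profile `f`, solving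
`f'' = (1 + f'²)(1 - (n-1) f' / r)` on `(0,∞)` with `f(0) = 0` and `f'(0⁺) = 0`,
satisfies `f'(r) > (1/n - ε) r` for every `ε ∈ (0, 1/n)` and every `r > 0`;
in particular `f'(r) > r/(2n)` for all `r > 0`. -/
theorem bowl_profile_gradient_lower_bound (n : ℕ) (hn : 2 ≤ n) (f : ℝ → ℝ)
    (hf0 : f 0 = 0)
    (hcont : ContinuousOn f (Set.Ici 0))
    (hC2 : ContDiffOn ℝ 2 f (Set.Ioi 0))
    (hd0 : Tendsto (deriv f) (nhdsWithin 0 (Set.Ioi 0)) (nhds 0))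
    (hODE : ∀ r : ℝ, 0 < r → deriv (deriv f) r =
      (1 + (deriv f r) ^ 2) * (1 - ((n : ℝ) - 1) * deriv f r / r)) :
    (∀ ε : ℝ, 0 < ε → ε < 1 / (n : ℝ) →
      ∀ r : ℝ, 0 < r → (1 / (n : ℝ) - ε) * r < deriv f r) ∧
    (∀ r : ℝ, 0 < r → r / (2 * (n : ℝ)) < deriv f r) :=
  bowl_profile_gradient_lower_bound_general n hn f hC2 hd0 hODE
end

section
/- Let n ≥ 2 and let f : [0,∞) → ℝ be continuous with f(0) = 0, twice continuously differentiable on (0,∞) with lim_{r→0⁺} f'(r) = 0, and satisfy f''(r) = (1 + f'(r)²)(1 - (n-1)f'(r)/r) for all r > 0. Then for every ε > 0 there exists r₀ = r₀(ε) > 0 such that f'(r) > (1-ε)·r/(n-1) for all r ≥ r₀. -/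
/-!
Write `g = f'` and `k = n - 1`, so that `g' = (1 + g²)(1 - k g / r)`, i.e.
`(arctan g)' = 1 - k g / r`. Fix `0 < δ < 1`. If `g` stayed below the line `(1 - δ) r / k`
on a half-line, `arctan g` would grow at rate at least `δ` there, which is impossible
since `arctan` is bounded. So `g` reaches the line at arbitrarily large `r`. At any crossing
point `r ≥ 1/δ` we get `g' = δ (1 + g²) > (1 - δ) / k`, so `g` cannot fall back below the
line. Halving `ε` turns this into the strict inequality.
-/

open Real Filter Set

def IsBowlSlope (k : ℝ) (g : ℝ → ℝ) : Prop :=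
  ∀ r, 0 < r → HasDerivAt g ((1 + g r ^ 2) * (1 - k * g r / r)) r

namespace IsBowlSlope

variable {k : ℝ} {g : ℝ → ℝ}

lemma hasDerivAt_arctan (hg : IsBowlSlope k g) {r : ℝ} (hr : 0 < r) :
    HasDerivAt (fun s => arctan (g s)) (1 - k * g r / r) r := by
  convert (hg r hr).arctan using 1
  field_simp

lemma exists_ge_line_le (hg : IsBowlSlope k g) (hk : 0 < k) {δ : ℝ} (hδ : 0 < δ) (R : ℝ) :
    ∃ r, R ≤ r ∧ (1 - δ) * r / k ≤ g r := by
  by_contra! hbelow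
  set R₁ := max R 1
  have hR₁ : 0 < R₁ := lt_max_of_lt_right one_pos
  have hderiv : ∀ r ∈ Ici R₁, HasDerivAt (fun s => arctan (g s)) (1 - k * g r / r) r :=
    fun r hr => hg.hasDerivAt_arctan (hR₁.trans_le hr)
  have hR₂ : R₁ ≤ R₁ + π / δ := le_add_of_nonneg_right (div_pos pi_pos hδ).le
  have hgrowth := (convex_Ici R₁).mul_sub_le_image_sub_of_le_deriv (C := δ)
    (fun r hr => (hderiv r hr).continuousAt.continuousWithinAt)
    (fun r hr => (hderiv r (interior_subset hr)).differentiableAt.differentiableWithinAt)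
    (fun r hr => by
      rw [interior_Ici] at hr
      have hbelow_r := hbelow r ((le_max_left _ _).trans hr.le)
      rw [lt_div_iff₀ hk] at hbelow_r
      rw [(hderiv r (mem_Ici.2 hr.le)).deriv, le_sub_comm, div_le_iff₀ (hR₁.trans hr)]
      linarith)
    R₁ self_mem_Ici (R₁ + π / δ) hR₂ hR₂
  have : δ * (R₁ + π / δ - R₁) = π := by field_simp; ring
  linarith [arctan_lt_pi_div_two (g (R₁ + π / δ)), neg_pi_div_two_lt_arctan (g R₁)]

lemma line_le_of_le (hg : IsBowlSlope k g) (hk : 0 < k) {δ : ℝ} (hδ : 0 < δ) (hδ1 : δ < 1)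
    {r₁ : ℝ} (hr₁ : 1 ≤ δ * r₁) (h₁ : (1 - δ) * r₁ / k ≤ g r₁) {r : ℝ} (hr : r₁ ≤ r) :
    (1 - δ) * r / k ≤ g r := by
  have hm : 0 < (1 - δ) / k := div_pos (by linarith) hk
  have hr₁pos : 0 < r₁ := pos_of_mul_pos_right (one_pos.trans_le hr₁) hδ.le
  have hline : ∀ x, HasDerivAt (fun s => (1 - δ) * s / k) ((1 - δ) / k) x := fun x => by
    simpa using ((hasDerivAt_id x).const_mul (1 - δ)).div_const k
  refine image_le_of_deriv_right_lt_deriv_boundary' (a := r₁) (b := r)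
    (fun x _ => (hline x).continuousAt.continuousWithinAt) (fun x _ => (hline x).hasDerivWithinAt)
    h₁ (fun x hx => (hg x (hr₁pos.trans_le hx.1)).continuousAt.continuousWithinAt)
    (fun x hx => (hg x (hr₁pos.trans_le hx.1)).hasDerivWithinAt) ?_ ⟨hr, le_rfl⟩
  rintro x ⟨hx, -⟩ hcross
  have hxpos : 0 < x := hr₁pos.trans_le hx
  have hδx : 1 ≤ δ * x := hr₁.trans (by gcongr)
  have hfac : 1 - k * ((1 - δ) * x / k) / x = δ := by field_simp; ring
  rw [← hcross, hfac]
  -- AM-GM: `δ (1 + (m x)²) ≥ 2 m (δ x) ≥ 2 m` for the slope `m = (1 - δ) / k`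
  calc (1 - δ) / k < 2 * ((1 - δ) / k) * (δ * x) := by nlinarith
    _ = 2 * ((1 - δ) * x / k) * δ := by ring
    _ ≤ (1 + ((1 - δ) * x / k) ^ 2) * δ := by
      gcongr; nlinarith [sq_nonneg ((1 - δ) * x / k - 1)]

lemma eventually_line_le (hg : IsBowlSlope k g) (hk : 0 < k) {δ : ℝ} (hδ : 0 < δ) (hδ1 : δ < 1) :
    ∀ᶠ r in atTop, (1 - δ) * r / k ≤ g r := by
  obtain ⟨r₁, hr₁, h₁⟩ := hg.exists_ge_line_le hk hδ (1 / δ)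
  have hδr₁ : 1 ≤ δ * r₁ := by rwa [div_le_iff₀' hδ] at hr₁
  exact eventually_atTop.2 ⟨r₁, fun r hr => hg.line_le_of_le hk hδ hδ1 hδr₁ h₁ hr⟩

end IsBowlSlope

lemma isBowlSlope_deriv {k : ℝ} {f : ℝ → ℝ} (hf : ContDiffOn ℝ 2 f (Ioi 0))
    (hODE : ∀ r : ℝ, 0 < r → deriv (deriv f) r =
      (1 + (deriv f r) ^ 2) * (1 - k * deriv f r / r)) :
    IsBowlSlope k (deriv f) := by
  have hdiff : DifferentiableOn ℝ (deriv f) (Ioi 0) :=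
    (hf.deriv_of_isOpen (m := 1) isOpen_Ioi (by norm_num)).differentiableOn (by norm_num)
  intro r hr
  rw [← hODE r hr]
  exact (hdiff.differentiableAt (isOpen_Ioi.mem_nhds hr)).hasDerivAt

theorem bowl_profile_gradient_asymptotic_general (n : ℕ) (hn : 2 ≤ n) (f : ℝ → ℝ)
    (hC2 : ContDiffOn ℝ 2 f (Set.Ioi 0))
    (hODE : ∀ r : ℝ, 0 < r → deriv (deriv f) r =
      (1 + (deriv f r) ^ 2) * (1 - ((n : ℝ) - 1) * deriv f r / r)) :
    ∀ ε : ℝ, 0 < ε → ∃ r₀ : ℝ, 0 < r₀ ∧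
      ∀ r : ℝ, r₀ ≤ r → (1 - ε) * r / ((n : ℝ) - 1) < deriv f r := by
  intro ε hε
  have hk : (0 : ℝ) < n - 1 := by
    have : (2 : ℝ) ≤ n := by exact_mod_cast hn
    linarith
  set δ := min ε 1 / 2 with hδ_def
  have hδ : 0 < δ := by positivity
  have hδε : δ < ε := by linarith [min_le_left ε 1]
  have hδ1 : δ < 1 := by linarith [min_le_right ε 1]
  obtain ⟨r₀, hr₀⟩ :=
    eventually_atTop.1 ((isBowlSlope_deriv hC2 hODE).eventually_line_le hk hδ hδ1)
  refine ⟨max r₀ 1, by positivity, fun r hr => ?_⟩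
  have hr_pos : 0 < r := lt_of_lt_of_le one_pos ((le_max_right _ _).trans hr)
  calc (1 - ε) * r / ((n : ℝ) - 1) < (1 - δ) * r / ((n : ℝ) - 1) := by gcongr
    _ ≤ deriv f r := hr₀ r ((le_max_left _ _).trans hr)

/-- Part (3) of Proposition 4.2: the bowl soliton profile `f`, solving
`f'' = (1 + f'²)(1 - (n-1) f' / r)` on `(0,∞)` with `f(0) = 0` and `f'(0⁺) = 0`,
satisfies: for every `ε > 0` there is `r₀ = r₀(ε) > 0` such that
`f'(r) > (1-ε) r/(n-1)` for all `r ≥ r₀`. -/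
theorem bowl_profile_gradient_asymptotic (n : ℕ) (hn : 2 ≤ n) (f : ℝ → ℝ)
    (hf0 : f 0 = 0)
    (hcont : ContinuousOn f (Set.Ici 0))
    (hC2 : ContDiffOn ℝ 2 f (Set.Ioi 0))
    (hd0 : Tendsto (deriv f) (nhdsWithin 0 (Set.Ioi 0)) (nhds 0))
    (hODE : ∀ r : ℝ, 0 < r → deriv (deriv f) r =
      (1 + (deriv f r) ^ 2) * (1 - ((n : ℝ) - 1) * deriv f r / r)) :
    ∀ ε : ℝ, 0 < ε → ∃ r₀ : ℝ, 0 < r₀ ∧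
      ∀ r : ℝ, r₀ ≤ r → (1 - ε) * r / ((n : ℝ) - 1) < deriv f r :=
  bowl_profile_gradient_asymptotic_general n hn f hC2 hODE
end

section
/- Let n ≥ 2 and let f : [0,∞) → ℝ be continuous with f(0) = 0, twice continuously differentiable on (0,∞) with lim_{r→0⁺} f'(r) = 0, and satisfy f''(r) = (1 + f'(r)²)(1 - (n-1)f'(r)/r) for all r > 0. Then for every ε > 0 there exists a constant M = M(ε) > 0 such that f(r) > (1-ε)·r²/(2(n-1)) - M for all r ≥ 0. -/
/-!
With `g = f'` and `N = n - 1` the equation reads `g' = (1 + g²)(1 - N g / r)`. Where `N g`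
touches the line `r` its derivative is `0 < 1`, so once `N g ≤ r` holds it persists; if it failed
at some `r`, then `N g > r` on all of `(0, r]`, making `g` decreasing there, which is incompatible
with `g(0⁺) = 0` and `g r > 0`. Hence `g' ≥ 0` and `g ≥ 0`. Next, `(arctan g)' = 1 - N g / r` and
`arctan g` is bounded, so `N g ≥ (1 - ε) r` somewhere beyond any `R`. Where `N g` touches this
line, `N g' = N ε (1 + g²)`, which exceeds `1 - ε` once `r` is large, so the inequality persists.
Integrating `f' ≥ (1 - ε) r / N` gives the quadratic lower bound.
-/

open Real Filter Set Topology

section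

variable {α β : Type*} [LinearOrder α] [TopologicalSpace α] [OrderTopology α] [DenselyOrdered α]
  [NoMaxOrder α] [TopologicalSpace β] [Preorder β] {g : α → β} {a b : α} {L : β}

theorem le_of_monotoneOn_Ioc_of_tendsto [ClosedIicTopology β] (hab : a < b)
    (hg : MonotoneOn g (Ioc a b)) (hlim : Tendsto g (𝓝[>] a) (𝓝 L)) : L ≤ g b := by
  refine le_of_tendsto hlim ?_
  filter_upwards [Ioo_mem_nhdsGT hab] with x hx
  exact hg ⟨hx.1, hx.2.le⟩ ⟨hab, le_rfl⟩ hx.2.le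

theorem le_of_antitoneOn_Ioc_of_tendsto [ClosedIciTopology β] (hab : a < b)
    (hg : AntitoneOn g (Ioc a b)) (hlim : Tendsto g (𝓝[>] a) (𝓝 L)) : g b ≤ L := by
  refine ge_of_tendsto hlim ?_
  filter_upwards [Ioo_mem_nhdsGT hab] with x hx
  exact hg ⟨hx.1, hx.2.le⟩ ⟨hab, le_rfl⟩ hx.2.le

end

def SolvesBowlSlopeODE (N : ℝ) (g : ℝ → ℝ) : Prop :=
  ∀ r > 0, HasDerivAt g ((1 + g r ^ 2) * (1 - N * g r / r)) r

namespace SolvesBowlSlopeODE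

variable {N : ℝ} {g : ℝ → ℝ}

theorem continuousOn (hg : SolvesBowlSlopeODE N g) {s : Set ℝ} (hs : s ⊆ Ioi 0) :
    ContinuousOn g s :=
  fun x hx => (hg x (hs hx)).continuousAt.continuousWithinAt

theorem mul_le_of_mul_le (hg : SolvesBowlSlopeODE N g) {a b : ℝ} (ha : 0 < a)
    (h : N * g a ≤ a) (hab : a ≤ b) : N * g b ≤ b := by
  have hpos : Icc a b ⊆ Ioi 0 := fun x hx => ha.trans_le hx.1
  refine image_le_of_deriv_right_lt_deriv_boundary (f := fun x => N * g x) (B := id)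
    (B' := fun _ => 1) (continuousOn_const.mul (hg.continuousOn hpos))
    (fun x hx => ((hg x (hpos (Ico_subset_Icc_self hx))).const_mul N).hasDerivWithinAt) h
    hasDerivAt_id ?_ ⟨hab, le_rfl⟩
  intro x hx hx_eq
  have hx0 : x ≠ 0 := (hpos (Ico_subset_Icc_self hx)).ne'
  have hslope : N * g x / x = 1 := by rw [hx_eq, id, div_self hx0]
  simp [hslope]

theorem mul_le (hg : SolvesBowlSlopeODE N g) (hN : 0 ≤ N) (hlim : Tendsto g (𝓝[>] 0) (𝓝 0))
    {r : ℝ} (hr : 0 < r) : N * g r ≤ r := by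
  by_contra! hr_lt
  have hbelow : ∀ x ∈ Ioc 0 r, x < N * g x := fun x hx => by
    by_contra! hx_le
    exact hr_lt.not_ge (hg.mul_le_of_mul_le hx.1 hx_le hx.2)
  have hanti : AntitoneOn g (Ioc 0 r) := by
    refine antitoneOn_of_hasDerivWithinAt_nonpos (convex_Ioc 0 r)
      (hg.continuousOn Ioc_subset_Ioi_self) (fun x hx => (hg x ?_).hasDerivWithinAt) fun x hx => ?_
    · exact (interior_subset hx : x ∈ Ioc 0 r).1
    · rw [interior_Ioc] at hx
      have hslope : 1 < N * g x / x := (one_lt_div hx.1).2 (hbelow x ⟨hx.1, hx.2.le⟩)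
      exact mul_nonpos_of_nonneg_of_nonpos (by positivity) (by linarith)
  have hgr : g r ≤ 0 := le_of_antitoneOn_Ioc_of_tendsto hr hanti hlim
  linarith [mul_nonpos_of_nonneg_of_nonpos hN hgr]

theorem monotoneOn (hg : SolvesBowlSlopeODE N g) (hN : 0 ≤ N)
    (hlim : Tendsto g (𝓝[>] 0) (𝓝 0)) : MonotoneOn g (Ioi 0) := by
  refine monotoneOn_of_hasDerivWithinAt_nonneg (convex_Ioi 0) (hg.continuousOn subset_rfl)
    (fun x hx => (hg x (interior_subset hx)).hasDerivWithinAt) fun x hx => ?_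
  rw [interior_Ioi] at hx
  have hslope : N * g x / x ≤ 1 := (div_le_one hx).2 (hg.mul_le hN hlim hx)
  exact mul_nonneg (by positivity) (by linarith)

theorem nonneg (hg : SolvesBowlSlopeODE N g) (hN : 0 ≤ N) (hlim : Tendsto g (𝓝[>] 0) (𝓝 0))
    {r : ℝ} (hr : 0 < r) : 0 ≤ g r :=
  le_of_monotoneOn_Ioc_of_tendsto hr ((hg.monotoneOn hN hlim).mono Ioc_subset_Ioi_self) hlim

theorem hasDerivAt_arctan (hg : SolvesBowlSlopeODE N g) {r : ℝ} (hr : 0 < r) :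
    HasDerivAt (fun x => arctan (g x)) (1 - N * g r / r) r := by
  convert (hg r hr).arctan using 1
  field_simp

theorem exists_le_mul (hg : SolvesBowlSlopeODE N g) {ε R : ℝ} (hε : 0 < ε) (hR : 0 < R) :
    ∃ r, R ≤ r ∧ (1 - ε) * r ≤ N * g r := by
  by_contra! hbelow
  have hpos : Ici R ⊆ Ioi 0 := fun x hx => hR.trans_le hx
  have hle : R ≤ R + π / ε := le_add_of_nonneg_right (by positivity)
  have hgrowth := (convex_Ici R).mul_sub_le_image_sub_of_le_deriv (f := fun x => arctan (g x))
    (fun x hx => (hg.hasDerivAt_arctan (hpos hx)).continuousAt.continuousWithinAt)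
    (fun x hx => (hg.hasDerivAt_arctan (hpos (interior_subset hx))).differentiableAt
      |>.differentiableWithinAt) (C := ε) (fun x hx => ?_)
    R self_mem_Ici (R + π / ε) hle hle
  · have h := arctan_lt_pi_div_two (g (R + π / ε))
    have h' := neg_pi_div_two_lt_arctan (g R)
    rw [add_sub_cancel_left, mul_div_cancel₀ _ hε.ne'] at hgrowth
    linarith
  · rw [interior_Ici] at hx
    rw [(hg.hasDerivAt_arctan (hR.trans hx)).deriv]
    have hslope : N * g x / x < 1 - ε := (div_lt_iff₀ (hR.trans hx)).2 (hbelow x hx.le)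
    linarith

theorem le_mul_of_le_mul (hg : SolvesBowlSlopeODE N g) (hN : 0 < N) {ε a b : ℝ} (hε : 0 < ε)
    (hε1 : ε < 1) (ha : 0 < a) (hlarge : N ≤ ε * (1 - ε) * a ^ 2)
    (h : (1 - ε) * a ≤ N * g a) (hab : a ≤ b) : (1 - ε) * b ≤ N * g b := by
  have hpos : Icc a b ⊆ Ioi 0 := fun x hx => ha.trans_le hx.1
  refine image_le_of_deriv_right_lt_deriv_boundary' (f := fun x => (1 - ε) * x)
    (B := fun x => N * g x) (continuousOn_const.mul continuousOn_id)
    (fun x _ => ((hasDerivAt_id x).const_mul (1 - ε)).hasDerivWithinAt) h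
    (continuousOn_const.mul (hg.continuousOn hpos))
    (fun x hx => ((hg x (hpos (Ico_subset_Icc_self hx))).const_mul N).hasDerivWithinAt) ?_
    ⟨hab, le_rfl⟩
  intro x hx hx_eq
  have hx0 : 0 < x := hpos (Ico_subset_Icc_self hx)
  have hslope : N * g x / x = 1 - ε := by rw [← hx_eq, mul_div_cancel_right₀ _ hx0.ne']
  have hlarge_x : N ≤ ε * (1 - ε) * x ^ 2 :=
    hlarge.trans (mul_le_mul_of_nonneg_left (pow_le_pow_left₀ ha.le hx.1 2) (by nlinarith))
  have hgx : N * (1 - ε) ≤ N * (N * ε * g x ^ 2) := calc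
    N * (1 - ε) ≤ ε * (1 - ε) * x ^ 2 * (1 - ε) :=
      mul_le_mul_of_nonneg_right hlarge_x (by linarith)
    _ = N * (N * ε * g x ^ 2) := by linear_combination ε * ((1 - ε) * x + N * g x) * hx_eq
  have hεg := le_of_mul_le_mul_left hgx hN
  rw [hslope, sub_sub_cancel]
  nlinarith [mul_pos hN hε]

theorem eventually_le_mul (hg : SolvesBowlSlopeODE N g) (hN : 0 < N) {ε : ℝ} (hε : 0 < ε)
    (hε1 : ε < 1) : ∀ᶠ r in atTop, (1 - ε) * r ≤ N * g r := by
  have hε' : 0 < ε * (1 - ε) := mul_pos hε (sub_pos.2 hε1)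
  have hsq : Tendsto (fun R : ℝ => ε * (1 - ε) * R ^ 2) atTop atTop :=
    (tendsto_pow_atTop two_ne_zero).const_mul_atTop hε'
  obtain ⟨R, hR, hRpos⟩ := ((hsq.eventually_ge_atTop N).and (eventually_gt_atTop 0)).exists
  obtain ⟨a, hRa, ha⟩ := hg.exists_le_mul hε hRpos
  filter_upwards [eventually_ge_atTop a] with b hab
  exact hg.le_mul_of_le_mul hN hε hε1 (hRpos.trans_le hRa)
    (hR.trans (mul_le_mul_of_nonneg_left (pow_le_pow_left₀ hRpos.le hRa 2) hε'.le)) ha hab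

end SolvesBowlSlopeODE

theorem exists_pos_mul_sq_sub_lt {f g : ℝ → ℝ} {c : ℝ} (hc : 0 ≤ c)
    (hcont : ContinuousOn f (Ici 0)) (hf : ∀ r > 0, HasDerivAt f (g r) r)
    (hg : ∀ r > 0, 0 ≤ g r) (hgc : ∀ᶠ r in atTop, c * r ≤ g r) :
    ∃ M, 0 < M ∧ ∀ r, 0 ≤ r → c * r ^ 2 / 2 - M < f r := by
  have hmono : MonotoneOn f (Ici 0) := by
    refine monotoneOn_of_hasDerivWithinAt_nonneg (convex_Ici 0) hcont
      (fun x hx => (hf x ?_).hasDerivWithinAt) fun x hx => hg x ?_ <;>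
    rwa [interior_Ici] at hx
  obtain ⟨R, hR⟩ := eventually_atTop.1 (hgc.and (eventually_gt_atTop 0))
  have hRpos : 0 < R := (hR R le_rfl).2
  have hquad : ∀ x, HasDerivAt (fun r => c * r ^ 2 / 2) (c * x) x := fun x =>
    (((hasDerivAt_pow 2 x).const_mul c).div_const 2).congr_deriv (by norm_num; ring)
  have hF : MonotoneOn (fun r => f r - c * r ^ 2 / 2) (Ici R) := by
    refine monotoneOn_of_hasDerivWithinAt_nonneg (convex_Ici R)
      ((hcont.mono fun x hx => hRpos.le.trans hx).sub (by fun_prop))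
      (fun x hx => ((hf x ?_).sub (hquad x)).hasDerivWithinAt) fun x hx => ?_
    all_goals rw [interior_Ici] at hx
    · exact hRpos.trans hx
    · exact sub_nonneg.2 (hR x hx.le).1
  refine ⟨c * R ^ 2 / 2 + |f 0| + 1, by positivity, fun r hr => ?_⟩
  have hf0 : -|f 0| ≤ f 0 := neg_abs_le _
  rcases le_total r R with hrR | hRr
  · have hcr : c * r ^ 2 ≤ c * R ^ 2 := by gcongr
    linarith [hmono self_mem_Ici hr hr]
  · linarith [hF self_mem_Ici hRr hRr, hmono self_mem_Ici hRpos.le hRpos.le]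

theorem bowl_profile_quadratic_lower_bound_general (n : ℕ) (hn : 2 ≤ n) (f : ℝ → ℝ)
    (hcont : ContinuousOn f (Set.Ici 0))
    (hC2 : ContDiffOn ℝ 2 f (Set.Ioi 0))
    (hd0 : Tendsto (deriv f) (nhdsWithin 0 (Set.Ioi 0)) (nhds 0))
    (hODE : ∀ r : ℝ, 0 < r → deriv (deriv f) r =
      (1 + (deriv f r) ^ 2) * (1 - ((n : ℝ) - 1) * deriv f r / r)) :
    ∀ ε : ℝ, 0 < ε → ∃ M : ℝ, 0 < M ∧
      ∀ r : ℝ, 0 ≤ r → (1 - ε) * r ^ 2 / (2 * ((n : ℝ) - 1)) - M < f r := by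
  intro ε hε
  have hN : (0 : ℝ) < n - 1 := by
    have : (2 : ℝ) ≤ n := by exact_mod_cast hn
    linarith
  have hf : ∀ r > 0, HasDerivAt f (deriv f r) r := fun r hr =>
    ((hC2.differentiableOn two_ne_zero).differentiableAt (Ioi_mem_nhds hr)).hasDerivAt
  have hC1 : ContDiffOn ℝ 1 (deriv f) (Ioi 0) := hC2.deriv_of_isOpen isOpen_Ioi (by norm_num)
  have hslope : SolvesBowlSlopeODE ((n : ℝ) - 1) (deriv f) := fun r hr => by
    rw [← hODE r hr]
    exact ((hC1.differentiableOn one_ne_zero).differentiableAt (Ioi_mem_nhds hr)).hasDerivAt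
  set δ := min ε (1 / 2)
  have hδ : 0 < δ := lt_min hε one_half_pos
  have hδ1 : δ < 1 := (min_le_right _ _).trans_lt one_half_lt_one
  obtain ⟨M, hM, hbound⟩ := exists_pos_mul_sq_sub_lt (c := (1 - δ) / ((n : ℝ) - 1))
    (div_nonneg (by linarith) hN.le) hcont hf (fun r hr => hslope.nonneg hN.le hd0 hr)
    ((hslope.eventually_le_mul hN hδ hδ1).mono fun r hr => by
      rwa [div_mul_eq_mul_div, div_le_iff₀' hN])
  refine ⟨M, hM, fun r hr => (sub_le_sub_right ?_ M).trans_lt (hbound r hr)⟩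
  rw [div_mul_eq_mul_div, div_div, mul_comm ((n : ℝ) - 1) 2]
  gcongr
  exact min_le_left _ _

/-- Part (4) of Proposition 4.2: the bowl soliton profile `f`, solving
`f'' = (1 + f'²)(1 - (n-1) f' / r)` on `(0,∞)` with `f(0) = 0` and `f'(0⁺) = 0`,
satisfies: for every `ε > 0` there is a constant `M = M(ε) > 0` with
`f(r) > (1-ε) r²/(2(n-1)) - M` for all `r ≥ 0`. -/
theorem bowl_profile_quadratic_lower_bound (n : ℕ) (hn : 2 ≤ n) (f : ℝ → ℝ)
    (hf0 : f 0 = 0)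
    (hcont : ContinuousOn f (Set.Ici 0))
    (hC2 : ContDiffOn ℝ 2 f (Set.Ioi 0))
    (hd0 : Tendsto (deriv f) (nhdsWithin 0 (Set.Ioi 0)) (nhds 0))
    (hODE : ∀ r : ℝ, 0 < r → deriv (deriv f) r =
      (1 + (deriv f r) ^ 2) * (1 - ((n : ℝ) - 1) * deriv f r / r)) :
    ∀ ε : ℝ, 0 < ε → ∃ M : ℝ, 0 < M ∧
      ∀ r : ℝ, 0 ≤ r → (1 - ε) * r ^ 2 / (2 * ((n : ℝ) - 1)) - M < f r :=
  bowl_profile_quadratic_lower_bound_general n hn f hcont hC2 hd0 hODE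
end
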